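/- Let n ≥ 1, d ≥ 1, p > 0, and let x : Fin n → ℝ × (Fin d → ℝ) be a dataset whose first coordinates x₁ have sample mean m₁ ≠ 0 and sample standard deviation s₁ > 0 with |m₁| < p·s₁, and whose second coordinates x₂ have sample mean m₂ and positive definite sample covariance S₂. Define m* = (−p²·m₁ + sign(m₁)·p·√((p²+4)·m₁² + 4·s₁²))/2 and σ* = |m*|/p. Then for every (m,σ) with σ > 0 and |m| ≥ p·σ and every (μ,Σ) with Σ positive definite, h×(x₁‖φ_{m,σ}) + h×(x₂‖g_{μ,Σ}) ≥ h×(x₁‖φ_{m*,σ*}) + h×(x₂‖g_{m₂,S₂}); i.e. the product density t ↦ φ_{m*,σ*}(t₁)·g_{m₂,S₂}(t₂) minimizes the empirical cross-entropy among all product Gaussian densities whose first factor satisfies the constraint |m| ≥ pσ. -/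

import Mathlib

open Matrix

/-- Univariate Gaussian density. -/
noncomputable def gaussPdf (m σ t : ℝ) : ℝ :=
  (1 / (σ * Real.sqrt (2 * Real.pi))) * Real.exp (-((t - m) ^ 2) / (2 * σ ^ 2))

/-- Multivariate Gaussian density. -/
noncomputable def mGaussPdf {d : ℕ} (m : Fin d → ℝ) (S : Matrix (Fin d) (Fin d) ℝ)
    (t : Fin d → ℝ) : ℝ :=
  (2 * Real.pi) ^ (-(d : ℝ) / 2) * S.det ^ (-(1 : ℝ) / 2) *
    Real.exp (-(1 / 2) * ((t - m) ⬝ᵥ S⁻¹.mulVec (t - m)))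

lemma c3l_trace_eq_sum_eig {d : ℕ} {M : Matrix (Fin d) (Fin d) ℝ} (hM : M.IsHermitian) :
    M.trace = ∑ i, hM.eigenvalues i := by
  conv_lhs => rw [hM.spectral_theorem]
  rw [Unitary.conjStarAlgAut_apply, Matrix.trace_mul_cycle]
  rw [(Matrix.mem_unitaryGroup_iff').mp (hM.eigenvectorUnitary).2]
  simp [Matrix.trace_diagonal]

lemma c3l_logdet_le_trace {d : ℕ} {M : Matrix (Fin d) (Fin d) ℝ} (hM : M.PosSemidef)
    (hdet : 0 < M.det) : Real.log M.det ≤ M.trace - d := by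
  have heig : ∀ i, 0 < hM.1.eigenvalues i := by
    intro i
    rcases lt_or_eq_of_le (hM.eigenvalues_nonneg i) with h | h
    · exact h
    · exfalso
      rw [hM.1.det_eq_prod_eigenvalues] at hdet
      have : ∏ i, hM.1.eigenvalues i = 0 := Finset.prod_eq_zero (Finset.mem_univ i) h.symm
      simp [this] at hdet
  have hdet' : M.det = ∏ i, hM.1.eigenvalues i := hM.1.det_eq_prod_eigenvalues
  rw [hdet', c3l_trace_eq_sum_eig hM.1, Real.log_prod (fun i _ => (heig i).ne')]
  have : ∀ i ∈ Finset.univ, Real.log (hM.1.eigenvalues i) ≤ hM.1.eigenvalues i - 1 :=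
    fun i _ => Real.log_le_sub_one_of_pos (heig i)
  calc ∑ i, Real.log (hM.1.eigenvalues i) ≤ ∑ i, (hM.1.eigenvalues i - 1) :=
        Finset.sum_le_sum this
    _ = (∑ i, hM.1.eigenvalues i) - d := by
        rw [Finset.sum_sub_distrib]; simp

lemma c3l_logdet_ineq {d : ℕ} {S Sig : Matrix (Fin d) (Fin d) ℝ} (hS : S.PosDef)
    (hSig : Sig.PosDef) :
    Real.log S.det + d ≤ Real.log Sig.det + (Sig⁻¹ * S).trace := by
  have hA : (Sig⁻¹).PosDef := hSig.inv
  open scoped MatrixOrder in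
  set R := CFC.sqrt S with hR
  open scoped MatrixOrder in
  have hRh : R.IsHermitian := (CFC.sqrt_nonneg S).posSemidef.1
  open scoped MatrixOrder in
  have hRR : R * R = S := CFC.sqrt_mul_sqrt_self S hS.posSemidef.nonneg
  have hC : (R * Sig⁻¹ * R).PosSemidef := by
    have := hA.posSemidef.mul_mul_conjTranspose_same R
    rwa [hRh.eq] at this
  have hdetC : (R * Sig⁻¹ * R).det = Sig⁻¹.det * S.det := by
    rw [Matrix.det_mul, Matrix.det_mul, ← hRR, Matrix.det_mul]; ring
  have htrC : (R * Sig⁻¹ * R).trace = (Sig⁻¹ * S).trace := by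
    rw [Matrix.trace_mul_cycle, hRR, Matrix.trace_mul_comm]
  have hdetpos : 0 < (R * Sig⁻¹ * R).det := by
    rw [hdetC]
    exact mul_pos hA.det_pos hS.det_pos
  have key := c3l_logdet_le_trace hC hdetpos
  rw [hdetC, htrC] at key
  rw [Real.log_mul hA.det_pos.ne' hS.det_pos.ne'] at key
  rw [Matrix.det_nonsing_inv, Ring.inverse_eq_inv', Real.log_inv] at key
  linarith

lemma c3l_trace_mul_vecMulVec {d : ℕ} (A : Matrix (Fin d) (Fin d) ℝ) (v : Fin d → ℝ) :
    (A * Matrix.vecMulVec v v).trace = v ⬝ᵥ A.mulVec v := by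
  simp only [Matrix.trace, Matrix.diag, Matrix.mul_apply, Matrix.vecMulVec_apply,
    dotProduct, Matrix.mulVec, dotProduct]
  congr 1; ext i
  rw [Finset.mul_sum]
  congr 1; ext j
  ring

lemma c3l_sum_dotProduct {n d : ℕ} (f : Fin n → Fin d → ℝ) (w : Fin d → ℝ) :
    ∑ i, f i ⬝ᵥ w = (∑ i, f i) ⬝ᵥ w := by
  simp only [dotProduct, Finset.sum_apply, Finset.sum_mul]
  rw [Finset.sum_comm]

lemma c3l_uni_key (p σ σs a s₁ b : ℝ) (hp : 0 < p) (hσ : 0 < σ) (hσs : 0 < σs)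
    (ha : 0 ≤ a)
    (hs1 : s₁^2 = σs^2 + a*p*σs - a^2)
    (hu : a < p*σs)
    (hb1 : 0 ≤ b) (hb2 : a ≤ p*σ → (p*σ - a)^2 ≤ b) :
    Real.log σs + (s₁^2 + (p*σs - a)^2)/(2*σs^2) ≤ Real.log σ + (s₁^2 + b)/(2*σ^2) := by
  have hlog : 1 - σs/σ ≤ Real.log σ - Real.log σs := by
    have h := Real.log_le_sub_one_of_pos (show 0 < σs/σ by positivity)
    rw [Real.log_div hσs.ne' hσ.ne'] at h
    linarith
  have hF : 0 ≤ 2*σ^2*σs^2 - 2*σ*σs^3 + σs^2*(s₁^2+b) - σ^2*(s₁^2+(p*σs-a)^2) := by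
    rw [hs1]
    rcases le_or_gt a (p*σ) with hc | hc
    · have hb := hb2 hc
      nlinarith [mul_nonneg (sq_nonneg (σ-σs)) (mul_nonneg (mul_nonneg ha hp.le) hσs.le),
        mul_nonneg (sq_nonneg (σ-σs)) (sq_nonneg σs),
        mul_nonneg (sq_nonneg σs) (sub_nonneg.2 hb)]
    · have hσσ : σ < σs := by nlinarith
      have h1 : 0 < p*σs - a := by linarith
      have h2 : 0 < a*σs - p*σ^2 := by nlinarith
      nlinarith [mul_nonneg (sq_nonneg (σ-σs)) (sq_nonneg σs),
        mul_nonneg (mul_pos h1 h2).le hσs.le,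
        mul_nonneg (sq_nonneg σs) hb1]
  have hE : (s₁^2 + (p*σs-a)^2)/(2*σs^2) - (s₁^2+b)/(2*σ^2) ≤ 1 - σs/σ := by
    rw [div_sub_div _ _ (by positivity : (2*σs^2 : ℝ) ≠ 0) (by positivity : (2*σ^2 : ℝ) ≠ 0),
      div_le_iff₀ (by positivity)]
    have hσne : σ ≠ 0 := hσ.ne'
    field_simp
    nlinarith [mul_nonneg hσ.le hF]
  linarith

lemma c3l_log_gaussPdf (m σ t : ℝ) (hσ : 0 < σ) :
    Real.log (gaussPdf m σ t) =
      -(Real.log σ + Real.log (Real.sqrt (2 * Real.pi))) - (t - m)^2 / (2 * σ^2) := by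
  have hsq : 0 < Real.sqrt (2 * Real.pi) := Real.sqrt_pos.2 (by positivity)
  unfold gaussPdf
  rw [Real.log_mul (by positivity) (Real.exp_ne_zero _), Real.log_exp, one_div,
    Real.log_inv, Real.log_mul hσ.ne' hsq.ne']
  ring

set_option maxHeartbeats 1600000 in
/-- The product density `φ_{m*,σ*} · g_{m₂,S₂}` minimizes the empirical
cross-entropy among all product Gaussian densities whose first factor satisfies
the linear constraint `|m| ≥ p σ`. -/
theorem c3l_one_cluster_optimal_product
    (n d : ℕ) (hn : 1 ≤ n) (hd : 1 ≤ d) (p : ℝ) (hp : 0 < p)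
    (x : Fin n → ℝ × (Fin d → ℝ))
    (m₁ : ℝ) (hm₁def : m₁ = (1 / (n : ℝ)) * ∑ i, (x i).1) (hm₁ : m₁ ≠ 0)
    (s₁ : ℝ) (hs₁ : 0 < s₁)
    (hs₁def : s₁ ^ 2 = (1 / (n : ℝ)) * ∑ i, ((x i).1 - m₁) ^ 2)
    (hcon : |m₁| < p * s₁)
    (m₂ : Fin d → ℝ) (hm₂ : m₂ = (1 / (n : ℝ)) • ∑ i, (x i).2)
    (S₂ : Matrix (Fin d) (Fin d) ℝ)
    (hS₂ : S₂ = (1 / (n : ℝ)) • ∑ i, Matrix.vecMulVec ((x i).2 - m₂) ((x i).2 - m₂))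
    (hpos : S₂.PosDef)
    (mstar σstar : ℝ)
    (hmstar : mstar =
      (-(p ^ 2) * m₁ + Real.sign m₁ * p * Real.sqrt ((p ^ 2 + 4) * m₁ ^ 2 + 4 * s₁ ^ 2)) / 2)
    (hσstar : σstar = |mstar| / p) :
    ∀ (m σ : ℝ), 0 < σ → p * σ ≤ |m| →
      ∀ (μ : Fin d → ℝ) (Sig : Matrix (Fin d) (Fin d) ℝ), Sig.PosDef →
        -(1 / (n : ℝ)) * ∑ i, Real.log (gaussPdf mstar σstar (x i).1)
            + -(1 / (n : ℝ)) * ∑ i, Real.log (mGaussPdf m₂ S₂ (x i).2) ≤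
          -(1 / (n : ℝ)) * ∑ i, Real.log (gaussPdf m σ (x i).1)
            + -(1 / (n : ℝ)) * ∑ i, Real.log (mGaussPdf μ Sig (x i).2) := by
  intro m σ hσ hfeas μ Sig hSig
  have hnR : (0 : ℝ) < (n : ℝ) := by exact_mod_cast hn
  have hnne : (n : ℝ) ≠ 0 := hnR.ne'
  -- ==================== properties of mstar ====================
  set D : ℝ := (p ^ 2 + 4) * m₁ ^ 2 + 4 * s₁ ^ 2 with hD
  have hDpos : 0 < D := by positivity
  have hsqD : Real.sqrt D ^ 2 = D := Real.sq_sqrt hDpos.le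
  have hss : Real.sign m₁ ^ 2 = 1 := by
    rcases lt_trichotomy m₁ 0 with h | h | h
    · rw [Real.sign_of_neg h]; norm_num
    · exact absurd h hm₁
    · rw [Real.sign_of_pos h]; norm_num
  have hsm : Real.sign m₁ * m₁ = |m₁| := by
    rcases lt_trichotomy m₁ 0 with h | h | h
    · rw [Real.sign_of_neg h, abs_of_neg h]; ring
    · exact absurd h hm₁
    · rw [Real.sign_of_pos h, abs_of_pos h]; ring
  have habs : 0 < |m₁| := abs_pos.2 hm₁
  have hstar : mstar ^ 2 + p ^ 2 * m₁ * mstar = p ^ 2 * (m₁ ^ 2 + s₁ ^ 2) := by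
    rw [hmstar]
    linear_combination (p ^ 2 * Real.sqrt D ^ 2 / 4) * hss + (p ^ 2 / 4) * hsqD
  have hDlt : p * |m₁| < Real.sqrt D := by
    have h1 : (p * |m₁|) ^ 2 < D := by nlinarith [sq_abs m₁]
    have h2 := Real.sqrt_lt_sqrt (by positivity) h1
    rwa [Real.sqrt_sq (by positivity)] at h2
  have hmm : 0 < mstar * m₁ := by
    have heq : mstar * m₁ = (-(p ^ 2) * m₁ ^ 2 + |m₁| * p * Real.sqrt D) / 2 := by
      rw [hmstar]
      linear_combination (p * Real.sqrt D / 2) * hsm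
    rw [heq]
    nlinarith [mul_pos (mul_pos hp habs) (sub_pos.2 hDlt), sq_abs m₁]
  have hmabs : m₁ * mstar = |m₁| * |mstar| := by
    rw [← abs_mul]
    rw [abs_of_pos (by linarith [mul_comm mstar m₁] : 0 < m₁ * mstar)]
  have habsstar : mstar ^ 2 = |mstar| ^ 2 := (sq_abs mstar).symm
  have hstar' : |mstar| ^ 2 + p ^ 2 * |m₁| * |mstar| = p ^ 2 * (m₁ ^ 2 + s₁ ^ 2) := by
    linear_combination hstar - habsstar - p ^ 2 * hmabs
  have hmstar_ne : mstar ≠ 0 := by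
    intro h
    rw [h] at hmm; simp at hmm
  have habss : 0 < |mstar| := abs_pos.2 hmstar_ne
  have hlt : |m₁| < |mstar| := by
    by_contra h
    push_neg at h
    have h1 : |mstar|^2 ≤ |m₁|^2 := pow_le_pow_left₀ (abs_nonneg mstar) h 2
    have h2 : |m₁|^2 < p^2 * s₁^2 := by
      have := pow_lt_pow_left₀ hcon (abs_nonneg m₁) (two_ne_zero)
      calc |m₁|^2 < (p * s₁)^2 := this
        _ = p^2 * s₁^2 := by ring
    have h3 : p^2 * |m₁| * |mstar| ≤ p^2 * |m₁| * |m₁| :=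
      mul_le_mul_of_nonneg_left h (by positivity)
    have h4 : |m₁|^2 = m₁^2 := sq_abs m₁
    nlinarith [hstar', h1, h2, h3, h4]
  have hσs : 0 < σstar := by rw [hσstar]; positivity
  have hpσs : p * σstar = |mstar| := by
    rw [hσstar]; field_simp
  -- hs1 form needed by c3l_uni_key
  have hs1form : s₁ ^ 2 = σstar ^ 2 + |m₁| * p * σstar - |m₁| ^ 2 := by
    have hp2 : (p:ℝ)^2 ≠ 0 := by positivity
    have hgoal : p ^ 2 * s₁ ^ 2 = p ^ 2 * (σstar ^ 2 + |m₁| * p * σstar - |m₁| ^ 2) := by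
      have hu2 : |mstar| ^ 2 = p ^ 2 * σstar ^ 2 := by rw [← hpσs]; ring
      have hu1 : p ^ 2 * |m₁| * |mstar| = p ^ 2 * |m₁| * (p * σstar) := by rw [hpσs]
      have h4 : |m₁| ^ 2 = m₁ ^ 2 := sq_abs m₁
      linear_combination (-1 : ℝ) * hstar' + hu2 + hu1 + p ^ 2 * h4
    exact mul_left_cancel₀ hp2 hgoal
  -- ==================== univariate part ====================
  have huni : ∀ (m' σ' : ℝ), 0 < σ' →
      -(1 / (n : ℝ)) * ∑ i, Real.log (gaussPdf m' σ' (x i).1) =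
      Real.log σ' + Real.log (Real.sqrt (2 * Real.pi)) + (s₁^2 + (m' - m₁)^2) / (2 * σ'^2) := by
    intro m' σ' hσ'
    have hsum0 : ∑ i, ((x i).1 - m₁) = 0 := by
      rw [Finset.sum_sub_distrib]
      have : ∑ i : Fin n, m₁ = (n:ℝ) * m₁ := by
        rw [Finset.sum_const, Finset.card_univ, Fintype.card_fin, nsmul_eq_mul]
      rw [this, hm₁def]
      field_simp
      ring
    have hdecomp : ∑ i, ((x i).1 - m')^2 =
        (∑ i, ((x i).1 - m₁)^2) + (n:ℝ) * (m' - m₁)^2 := by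
      have : ∀ i : Fin n, ((x i).1 - m')^2 =
          ((x i).1 - m₁)^2 + 2 * (m₁ - m') * ((x i).1 - m₁) + (m₁ - m')^2 := by
        intro i; ring
      rw [Finset.sum_congr rfl (fun i _ => this i)]
      rw [Finset.sum_add_distrib, Finset.sum_add_distrib, ← Finset.mul_sum, hsum0]
      rw [Finset.sum_const, Finset.card_univ, Fintype.card_fin, nsmul_eq_mul]
      ring
    rw [Finset.sum_congr rfl (fun i _ => c3l_log_gaussPdf m' σ' (x i).1 hσ')]
    rw [Finset.sum_sub_distrib, Finset.sum_const, Finset.card_univ, Fintype.card_fin,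
      nsmul_eq_mul]
    rw [← Finset.sum_div, hdecomp]
    have hs₁' : ∑ i, ((x i).1 - m₁)^2 = (n:ℝ) * s₁^2 := by
      rw [hs₁def]; field_simp
    rw [hs₁']
    field_simp
    ring
  have hb2 : |m₁| ≤ p*σ → (p*σ - |m₁|)^2 ≤ (m - m₁)^2 := by
    intro hc
    have h1 : p*σ - |m₁| ≤ |m - m₁| := by
      have := abs_sub_abs_le_abs_sub m m₁
      linarith [hfeas]
    have h2 : 0 ≤ p*σ - |m₁| := by linarith
    calc (p*σ - |m₁|)^2 ≤ |m - m₁|^2 := pow_le_pow_left₀ h2 h1 2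
      _ = (m - m₁)^2 := sq_abs _
  have hkey1 := c3l_uni_key p σ σstar |m₁| s₁ ((m - m₁)^2) hp hσ hσs (abs_nonneg m₁)
    hs1form (by rw [hpσs]; exact hlt) (sq_nonneg _) hb2
  have hmstarm₁ : (mstar - m₁)^2 = (p*σstar - |m₁|)^2 := by
    rw [hpσs]
    have : mstar * m₁ = |mstar| * |m₁| := by linear_combination hmabs
    nlinarith [sq_abs mstar, sq_abs m₁]
  have hA : -(1 / (n : ℝ)) * ∑ i, Real.log (gaussPdf mstar σstar (x i).1) ≤
      -(1 / (n : ℝ)) * ∑ i, Real.log (gaussPdf m σ (x i).1) := by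
    rw [huni mstar σstar hσs, huni m σ hσ, hmstarm₁]
    linarith [hkey1]
  -- ==================== multivariate part ====================
  have htwopi : (0:ℝ) < 2 * Real.pi := by positivity
  have hlogm : ∀ (μ' : Fin d → ℝ) (Sig' : Matrix (Fin d) (Fin d) ℝ), 0 < Sig'.det →
      ∀ t, Real.log (mGaussPdf μ' Sig' t) =
        (-(d:ℝ)/2) * Real.log (2*Real.pi) + (-(1:ℝ)/2) * Real.log Sig'.det
          + (-(1/2) * ((t - μ') ⬝ᵥ Sig'⁻¹.mulVec (t - μ'))) := by
    intro μ' Sig' hdet t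
    unfold mGaussPdf
    rw [Real.log_mul (by positivity) (Real.exp_ne_zero _),
      Real.log_mul (by positivity) (by positivity),
      Real.log_rpow htwopi, Real.log_rpow hdet, Real.log_exp]
  -- sum of centered vectors is zero
  have hsum0v : ∑ i, ((x i).2 - m₂) = 0 := by
    rw [Finset.sum_sub_distrib]
    have : ∑ i : Fin n, m₂ = (n:ℝ) • m₂ := by
      rw [Finset.sum_const, Finset.card_univ, Fintype.card_fin]
      exact (Nat.cast_smul_eq_nsmul ℝ n m₂).symm
    rw [this, hm₂, smul_smul]
    field_simp
    rw [one_smul, sub_self]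
  have hcov : ∑ i, Matrix.vecMulVec ((x i).2 - m₂) ((x i).2 - m₂) = (n:ℝ) • S₂ := by
    rw [hS₂, smul_smul]
    field_simp
    rw [one_smul]
  -- quadratic decomposition
  have hquad : ∀ (μ' : Fin d → ℝ) (A : Matrix (Fin d) (Fin d) ℝ),
      ∑ i, (((x i).2 - μ') ⬝ᵥ A.mulVec ((x i).2 - μ')) =
        (n:ℝ) * (A * S₂).trace + (n:ℝ) * ((m₂ - μ') ⬝ᵥ A.mulVec (m₂ - μ')) := by
    intro μ' A
    have hexp : ∀ i : Fin n, ((x i).2 - μ') ⬝ᵥ A.mulVec ((x i).2 - μ') =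
        (((x i).2 - m₂) ⬝ᵥ A.mulVec ((x i).2 - m₂))
        + (((x i).2 - m₂) ⬝ᵥ A.mulVec (m₂ - μ'))
        + ((m₂ - μ') ⬝ᵥ A.mulVec ((x i).2 - m₂))
        + ((m₂ - μ') ⬝ᵥ A.mulVec (m₂ - μ')) := by
      intro i
      have h : (x i).2 - μ' = ((x i).2 - m₂) + (m₂ - μ') := by
        ext j; simp only [Pi.sub_apply, Pi.add_apply]; ring
      rw [h, Matrix.mulVec_add, dotProduct_add, add_dotProduct,
        add_dotProduct]
      ring
    rw [Finset.sum_congr rfl (fun i _ => hexp i)]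
    rw [Finset.sum_add_distrib, Finset.sum_add_distrib, Finset.sum_add_distrib]
    have hc1 : ∑ i, (((x i).2 - m₂) ⬝ᵥ A.mulVec (m₂ - μ')) = 0 := by
      rw [c3l_sum_dotProduct (fun i => (x i).2 - m₂) (A.mulVec (m₂ - μ')), hsum0v,
        zero_dotProduct]
    have hc2 : ∑ i, ((m₂ - μ') ⬝ᵥ A.mulVec ((x i).2 - m₂)) = 0 := by
      have : ∀ i : Fin n, (m₂ - μ') ⬝ᵥ A.mulVec ((x i).2 - m₂)
          = Matrix.vecMul (m₂ - μ') A ⬝ᵥ ((x i).2 - m₂) := fun i =>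
        (dotProduct_mulVec _ _ _)
      rw [Finset.sum_congr rfl (fun i _ => this i)]
      have := c3l_sum_dotProduct (fun i => (x i).2 - m₂) (Matrix.vecMul (m₂ - μ') A)
      rw [Finset.sum_congr rfl (fun i _ => dotProduct_comm _ _), this, hsum0v,
        zero_dotProduct]
    have hc0 : ∑ i, (((x i).2 - m₂) ⬝ᵥ A.mulVec ((x i).2 - m₂)) = (n:ℝ) * (A * S₂).trace := by
      have : ∀ i : Fin n, ((x i).2 - m₂) ⬝ᵥ A.mulVec ((x i).2 - m₂)
          = (A * Matrix.vecMulVec ((x i).2 - m₂) ((x i).2 - m₂)).trace := fun i =>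
        (c3l_trace_mul_vecMulVec A _).symm
      rw [Finset.sum_congr rfl (fun i _ => this i), ← Matrix.trace_sum, ← Matrix.mul_sum,
        hcov, Matrix.mul_smul, Matrix.trace_smul]
      simp
    rw [hc0, hc1, hc2, Finset.sum_const, Finset.card_univ, Fintype.card_fin, nsmul_eq_mul]
    ring
  -- cross entropy formula for the multivariate part
  have hmulti : ∀ (μ' : Fin d → ℝ) (Sig' : Matrix (Fin d) (Fin d) ℝ) (h' : Sig'.PosDef),
      -(1 / (n : ℝ)) * ∑ i, Real.log (mGaussPdf μ' Sig' (x i).2) =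
        ((d:ℝ)/2) * Real.log (2*Real.pi) + (1/2) * Real.log Sig'.det
          + (1/2) * ((Sig'⁻¹ * S₂).trace + ((m₂ - μ') ⬝ᵥ Sig'⁻¹.mulVec (m₂ - μ'))) := by
    intro μ' Sig' h'
    rw [Finset.sum_congr rfl (fun i _ => hlogm μ' Sig' h'.det_pos (x i).2)]
    rw [Finset.sum_add_distrib, Finset.sum_add_distrib, Finset.sum_const, Finset.sum_const,
      Finset.card_univ, Fintype.card_fin, nsmul_eq_mul, nsmul_eq_mul]
    rw [← Finset.mul_sum, hquad μ' Sig'⁻¹]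
    field_simp
    ring
  have htrid : (S₂⁻¹ * S₂).trace = (d:ℝ) := by
    rw [Matrix.nonsing_inv_mul S₂ hpos.det_pos.ne'.isUnit, Matrix.trace_one]
    simp
  have hvsame : ((m₂ - m₂) ⬝ᵥ S₂⁻¹.mulVec (m₂ - m₂)) = 0 := by
    simp
  have hvpos : 0 ≤ ((m₂ - μ) ⬝ᵥ Sig⁻¹.mulVec (m₂ - μ)) := by
    have := hSig.inv.posSemidef.dotProduct_mulVec_nonneg (m₂ - μ)
    simpa using this
  have hBkey := c3l_logdet_ineq hpos hSig
  have hB : -(1 / (n : ℝ)) * ∑ i, Real.log (mGaussPdf m₂ S₂ (x i).2) ≤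
      -(1 / (n : ℝ)) * ∑ i, Real.log (mGaussPdf μ Sig (x i).2) := by
    rw [hmulti m₂ S₂ hpos, hmulti μ Sig hSig, htrid, hvsame]
    linarith
  linarith
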